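/- In mZ_n, for any binary connective ∗ ∈ {⇒, ∧, ∨} and any n ≥ 1, the formula ¬((A ∗ B)ⁿ) ⇒ (¬(Aⁿ) ∨ ¬(Bⁿ)) is derivable, where Cⁿ denotes n-fold application of C° := ¬(C ∧ ¬C). -/
import Mathlib


inductive Fm where
  | var : Nat → Fm
  | bot : Fm
  | top : Fm
  | neg : Fm → Fm
  | and : Fm → Fm → Fm
  | or  : Fm → Fm → Fm
  | imp : Fm → Fm → Fm
deriving DecidableEq

open Fm

/-- Axioms (1)-(8) of positive intuitionistic propositional calculus IPC⁺. -/
def PosAx (f : Fm) : Prop := ∃ A B C,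
  f = imp A (imp B A) ∨
  f = imp (imp A B) (imp (imp A (imp B C)) (imp A C)) ∨
  f = imp A (imp B (Fm.and A B)) ∨
  f = imp (Fm.and A B) A ∨
  f = imp (Fm.and A B) B ∨
  f = imp A (Fm.or A B) ∨
  f = imp B (Fm.or A B) ∨
  f = imp (imp A C) (imp (imp B C) (imp (Fm.or A B) C))

/-- Axiom (9b): contraposition. -/
def Ax9b (f : Fm) : Prop := ∃ A B, f = imp (imp A B) (imp (neg B) (neg A))

/-- Axiom (10b)': 1 ⇒ ¬0. -/
def Ax10b' (f : Fm) : Prop := f = imp Fm.top (neg Fm.bot)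

/-- Axiom (11b): A ⇒ 1 and 0 ⇒ A. -/
def Ax11b (f : Fm) : Prop := ∃ A, f = imp A Fm.top ∨ f = imp Fm.bot A

/-- Axiom (12b): (¬A ∧ ¬B) ⇒ ¬(A ∨ B). -/
def Ax12b (f : Fm) : Prop := ∃ A B, f = imp (Fm.and (neg A) (neg B)) (neg (Fm.or A B))

/-- Axiom (13b): ¬(A ∧ B) ⇒ (¬A ∨ ¬B). -/
def Ax13b (f : Fm) : Prop := ∃ A B, f = imp (neg (Fm.and A B)) (Fm.or (neg A) (neg B))

/-- Axioms of the system mZ_n. -/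
def MZAx (f : Fm) : Prop := PosAx f ∨ Ax9b f ∨ Ax10b' f ∨ Ax11b f ∨ Ax12b f

/-- Axioms of the system mCZ_n. -/
def MCZAx (f : Fm) : Prop := MZAx f ∨ Ax13b f

/-- Hilbert-style derivability from hypotheses H with axiom set Ax; Modus Ponens only rule. -/
inductive Deriv (Ax : Fm → Prop) (H : Set Fm) : Fm → Prop
  | ax  {f : Fm} : Ax f → Deriv Ax H f
  | hyp {f : Fm} : f ∈ H → Deriv Ax H f
  | mp  {A B : Fm} : Deriv Ax H (imp A B) → Deriv Ax H A → Deriv Ax H B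

/-- A° = ¬(A ∧ ¬A). -/
def circ (A : Fm) : Fm := neg (Fm.and A (neg A))

/-- Aⁿ : n-fold application of °, A⁰ = A. -/
def pow (A : Fm) : Nat → Fm
  | 0 => A
  | n + 1 => circ (pow A n)

/-- A^{(n)} = A¹ ∧ A² ∧ … ∧ Aⁿ (for n ≥ 1; conventionally ⊤ for n = 0). -/
def conN (A : Fm) : Nat → Fm
  | 0 => Fm.top
  | 1 => pow A 1
  | n + 2 => Fm.and (conN A (n + 1)) (pow A (n + 2))


namespace StmtAux
open Fm

abbrev D (f : Fm) : Prop := Deriv MZAx (∅ : Set Fm) f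

lemma dax1 (A B : Fm) : D (imp A (imp B A)) :=
  Deriv.ax (Or.inl ⟨A, B, B, Or.inl rfl⟩)

lemma dax2 (A B C : Fm) :
    D (imp (imp A B) (imp (imp A (imp B C)) (imp A C))) :=
  Deriv.ax (Or.inl ⟨A, B, C, Or.inr (Or.inl rfl)⟩)

lemma dax4 (A B : Fm) : D (imp (Fm.and A B) A) :=
  Deriv.ax (Or.inl ⟨A, B, B, Or.inr (Or.inr (Or.inr (Or.inl rfl)))⟩)

lemma dax5 (A B : Fm) : D (imp (Fm.and A B) B) :=
  Deriv.ax (Or.inl ⟨A, B, B, Or.inr (Or.inr (Or.inr (Or.inr (Or.inl rfl))))⟩)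

lemma dax6 (A B : Fm) : D (imp A (Fm.or A B)) :=
  Deriv.ax (Or.inl ⟨A, B, B, Or.inr (Or.inr (Or.inr (Or.inr (Or.inr (Or.inl rfl)))))⟩)

lemma dax9b (A B : Fm) : D (imp (imp A B) (imp (neg B) (neg A))) :=
  Deriv.ax (Or.inr (Or.inl ⟨A, B, rfl⟩))

lemma dax11t (A : Fm) : D (imp A Fm.top) :=
  Deriv.ax (Or.inr (Or.inr (Or.inr (Or.inl ⟨A, Or.inl rfl⟩))))

lemma dId (A : Fm) : D (imp A A) :=
  Deriv.mp (Deriv.mp (dax2 A (imp A A) A) (dax1 A A)) (dax1 A (imp A A))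

lemma dComp {A B C : Fm} (h1 : D (imp A B)) (h2 : D (imp B C)) : D (imp A C) :=
  Deriv.mp (Deriv.mp (dax2 A B C) h1) (Deriv.mp (dax1 (imp B C) A) h2)

lemma dContraction {A B : Fm} (h : D (imp A (imp A B))) : D (imp A B) :=
  Deriv.mp (Deriv.mp (dax2 A A B) (dId A)) h

lemma dContrapose {A B : Fm} (h : D (imp A B)) : D (imp (neg B) (neg A)) :=
  Deriv.mp (dax9b A B) h

/-- From ¬Xⁿ derive ¬⊤ (for n = m+1). -/
lemma negPow_negTop (X : Fm) (m : Nat) :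
    D (imp (neg (pow X (m+1))) (neg Fm.top)) := by
  set P := pow X m with hP
  have hE : pow X (m+1) = neg (Fm.and P (neg P)) := rfl
  set E := Fm.and P (neg P) with hEdef
  rw [hE]
  -- d1 : ¬¬E ⇒ ¬E
  have dc : D (imp (neg (neg E)) (neg (neg P))) :=
    dContrapose (dContrapose (dax4 P (neg P)))
  have dL1 : D (imp (neg (neg P)) (neg E)) :=
    dContrapose (dax5 P (neg P))
  have d1 : D (imp (neg (neg E)) (neg E)) := dComp dc dL1
  have d3 : D (imp (neg (neg E)) (imp Fm.top (neg E))) :=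
    dComp d1 (dax1 (neg E) Fm.top)
  have d5 : D (imp (neg (neg E)) (imp (neg (neg E)) (neg Fm.top))) :=
    dComp d3 (dax9b Fm.top (neg E))
  exact dContraction d5

end StmtAux

theorem stmt6 (A B : Fm) (n : Nat) (hn : 1 ≤ n) :
    ∀ star ∈ ({Fm.imp, Fm.and, Fm.or} : Set (Fm → Fm → Fm)),
      Deriv MZAx ∅ (imp (neg (pow (star A B) n)) (Fm.or (neg (pow A n)) (neg (pow B n)))) := by
  obtain ⟨m, rfl⟩ : ∃ m, n = m + 1 := ⟨n - 1, by omega⟩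
  intro star _
  have d6 := StmtAux.negPow_negTop (star A B) m
  have d7 : StmtAux.D (imp (neg Fm.top) (neg (pow A (m+1)))) :=
    StmtAux.dContrapose (StmtAux.dax11t (pow A (m+1)))
  have d8 := StmtAux.dComp d6 d7
  exact StmtAux.dComp d8 (StmtAux.dax6 (neg (pow A (m+1))) (neg (pow B (m+1))))
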